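/- Let G be a weighted directed graph on vertex set {1,…,N} with Laplacian L, suppose G has a rooted-out branch, and consider the dynamics q̇(t) = −(L ⊗ I_n) q(t) on ℝ^{nN} with solution q(t) = exp(−t(L ⊗ I_n)) q(0). Then the following are equivalent: (i) there exists a NONZERO point q^∞ in the consensus set E = {x ∈ ℝ^{nN} : x_1 = ⋯ = x_N} such that q(t) converges exponentially to q^∞ (i.e., there are η, λ > 0 with ‖q(t) − q^∞‖ ≤ η e^{−λ t} ‖q(0) − q^∞‖ for all t ≥ 0); (ii) the initial value q(0) does not lie in the column space of the matrix L ⊗ I_n. -/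

import Mathlib

open scoped Kronecker

/-- The Laplacian of the weighted directed graph on `Fin N` with weights `a`. -/
def graphLaplacian {N : ℕ} (a : Fin N → Fin N → ℝ) : Matrix (Fin N) (Fin N) ℝ :=
  Matrix.of fun i j => if i = j then ∑ k ∈ Finset.univ.erase i, a i k else -(a i j)

/-- `G` has a rooted-out branch: some vertex has a directed path to every other vertex
(information flows from `j` to `i` along an edge when `a i j > 0`). -/
def hasRootedOutBranch {N : ℕ} (a : Fin N → Fin N → ℝ) : Prop :=
  ∃ r : Fin N, ∀ v : Fin N, Relation.ReflTransGen (fun u v => 0 < a v u) r v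

/-- The Euclidean norm on `ℝ^m`. -/
noncomputable def euclidNorm {m : Type*} [Fintype m] (v : m → ℝ) : ℝ :=
  Real.sqrt (∑ i, v i ^ 2)

/-!
Write `L = c • 1 - B` with `B` entrywise nonnegative. Then `exp (-t L) = e^{-ct} exp (t B)` is
row-stochastic, and a directed path from the root `r` to `i` makes `(B ^ k) i r > 0` for some `k`,
so the `r`-th column of `exp (-L)` is strictly positive. A row-stochastic matrix with a column
bounded below by `c > 0` shrinks the spread `max x - min x` by the factor `1 - c`; the nested
intervals `[min, max]` of the iterates close down on a common limit at a geometric rate, which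
gives exponential convergence of every block `q (·, k)` to a consensus value.

Every `exp (-t M) q₀ - q₀` lies in the range of `M = L ⊗ Iₙ`, which is closed, so `q∞ - q₀`
does too and `q₀ ∈ range M ↔ q∞ ∈ range M`. A nonzero consensus vector is never in the range:
`L y` is `≤ 0` at a minimum of `y` and `≥ 0` at a maximum, so it is not a nonzero constant.
-/

open NormedSpace Filter Topology Matrix
open scoped Nat

namespace Matrix

section Exp

variable {ι : Type*} [Fintype ι] [DecidableEq ι]

attribute [local instance] Matrix.linftyOpNormedRing Matrix.linftyOpNormedAlgebra

theorem hasSum_exp_mulVec (X : Matrix ι ι ℝ) (v : ι → ℝ) :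
    HasSum (fun k => (k ! : ℝ)⁻¹ • (X ^ k *ᵥ v)) (exp X *ᵥ v) := by
  convert (exp_series_hasSum_exp' (𝕂 := ℝ) X).map ((mulVecBilin ℝ ℝ).flip v)
    (LinearMap.continuous_of_finiteDimensional _) using 1
  · ext k : 1
    simp
  · rfl

theorem exp_mulVec_of_mulVec_eq_zero {X : Matrix ι ι ℝ} {v : ι → ℝ} (h : X *ᵥ v = 0) :
    exp X *ᵥ v = v := by
  refine (hasSum_exp_mulVec X v).unique ?_
  convert hasSum_single (f := fun k => (k ! : ℝ)⁻¹ • (X ^ k *ᵥ v)) 0 fun k hk => ?_ using 1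
  · simp
  · obtain ⟨k, rfl⟩ := Nat.exists_eq_succ_of_ne_zero hk
    rw [pow_succ, ← mulVec_mulVec, h, mulVec_zero, smul_zero]

theorem exp_mulVec_sub_mem_range (X : Matrix ι ι ℝ) (v : ι → ℝ) :
    exp X *ᵥ v - v ∈ LinearMap.range X.mulVecLin := by
  have h := (hasSum_nat_add_iff' 1).2 (hasSum_exp_mulVec X v)
  simp only [Finset.range_one, Finset.sum_singleton, pow_zero, one_mulVec, Nat.factorial_zero,
    Nat.cast_one, inv_one, one_smul] at h
  rw [← h.tsum_eq]
  refine tsum_mem (Submodule.closed_of_finiteDimensional _) fun k => Submodule.smul_mem _ _ ?_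
  exact ⟨X ^ k *ᵥ v, by rw [mulVecLin_apply, mulVec_mulVec, ← pow_succ']⟩

theorem pow_apply_div_factorial_le_exp_apply {B : Matrix ι ι ℝ} (hB : ∀ i j, 0 ≤ B i j)
    (k : ℕ) (i j : ι) : (k ! : ℝ)⁻¹ * (B ^ k) i j ≤ exp B i j := by
  have h := Pi.hasSum.1 (Pi.hasSum.1 (exp_series_hasSum_exp' (𝕂 := ℝ) B) i) j
  exact le_hasSum h k fun l _ => mul_nonneg (by positivity) (pow_apply_nonneg hB l i j)

theorem exp_apply_nonneg {B : Matrix ι ι ℝ} (hB : ∀ i j, 0 ≤ B i j) (i j : ι) :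
    0 ≤ exp B i j :=
  le_trans (mul_nonneg (by positivity) (pow_apply_nonneg hB 0 i j))
    (pow_apply_div_factorial_le_exp_apply hB 0 i j)

theorem exp_add_smul_one (B : Matrix ι ι ℝ) (c : ℝ) :
    exp (B + c • 1) = Real.exp c • exp B := by
  rw [exp_add_of_commute _ _ ((Commute.one_right B).smul_right c), smul_one_eq_diagonal,
    exp_diagonal, Pi.exp_def, ← Real.exp_eq_exp_ℝ, ← smul_one_eq_diagonal, mul_smul_comm, mul_one]

theorem exists_pow_apply_pos_of_reflTransGen {B : Matrix ι ι ℝ} (hB : ∀ i j, 0 ≤ B i j)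
    {r i : ι} (h : Relation.ReflTransGen (fun u v => 0 < B v u) r i) : ∃ k, 0 < (B ^ k) i r := by
  induction h with
  | refl => exact ⟨0, by simp⟩
  | @tail u v _ huv ih =>
    obtain ⟨k, hk⟩ := ih
    refine ⟨k + 1, ?_⟩
    rw [pow_succ', mul_apply]
    exact lt_of_lt_of_le (mul_pos huv hk) <| Finset.single_le_sum
      (fun l _ => mul_nonneg (hB v l) (pow_apply_nonneg hB k l r)) (Finset.mem_univ u)

end Exp

section Stochastic

open Set

variable {ι : Type*} [Fintype ι] [DecidableEq ι] {P : Matrix ι ι ℝ}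

theorem mulVec_sub_const_of_mem_rowStochastic (hP : P ∈ rowStochastic ℝ ι) (x : ι → ℝ)
    (μ : ℝ) : P *ᵥ (x - fun _ => μ) = P *ᵥ x - fun _ => μ := by
  have hconst : (fun _ => μ : ι → ℝ) = μ • 1 := by ext; simp
  rw [mulVec_sub, hconst, mulVec_smul, one_vecMul_of_mem_rowStochastic hP]

theorem norm_mulVec_le_of_mem_rowStochastic (hP : P ∈ rowStochastic ℝ ι) (z : ι → ℝ) :
    ‖P *ᵥ z‖ ≤ ‖z‖ := by
  refine (pi_norm_le_iff_of_nonneg (norm_nonneg z)).2 fun i => ?_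
  calc ‖(P *ᵥ z) i‖ ≤ ∑ j, ‖P i j * z j‖ := norm_sum_le _ _
    _ ≤ ∑ j, P i j * ‖z‖ := Finset.sum_le_sum fun j _ => by
        rw [norm_mul, Real.norm_of_nonneg (nonneg_of_mem_rowStochastic hP)]
        exact mul_le_mul_of_nonneg_left (norm_le_pi_norm z j) (nonneg_of_mem_rowStochastic hP)
    _ = ‖z‖ := by rw [← Finset.sum_mul, sum_row_of_mem_rowStochastic hP, one_mul]

theorem mulVec_apply_mem_Icc_of_mem_rowStochastic (hP : P ∈ rowStochastic ℝ ι) {r : ι} {c : ℝ}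
    (hc : ∀ i, c ≤ P i r) {x : ι → ℝ} {lo hi : ℝ} (hx : ∀ j, x j ∈ Icc lo hi) (i : ι) :
    (P *ᵥ x) i ∈ Icc (lo + c * (x r - lo)) (hi - c * (hi - x r)) := by
  have key : ∀ y : ι → ℝ, 0 ≤ y → c * y r ≤ (P *ᵥ y) i := fun y hy =>
    (mul_le_mul_of_nonneg_right (hc i) (hy r)).trans <| Finset.single_le_sum
      (f := fun j => P i j * y j) (fun j _ => mul_nonneg (nonneg_of_mem_rowStochastic hP) (hy j))
      (Finset.mem_univ r)
  have hlo := key (x - fun _ => lo) fun j => sub_nonneg.2 (hx j).1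
  have hhi := key ((fun _ => hi) - x) fun j => sub_nonneg.2 (hx j).2
  rw [mulVec_sub_const_of_mem_rowStochastic hP] at hlo
  rw [← neg_sub, mulVec_neg, mulVec_sub_const_of_mem_rowStochastic hP] at hhi
  simp only [Pi.sub_apply, Pi.neg_apply, neg_sub] at hlo hhi
  constructor <;> linarith

theorem exists_abs_pow_mulVec_sub_le [Nonempty ι] (hP : P ∈ rowStochastic ℝ ι) {r : ι}
    {c : ℝ} (hc₀ : 0 ≤ c) (hc : ∀ i, c ≤ P i r) (x : ι → ℝ) :
    ∃ μ : ℝ, ∀ k i, |(P ^ k *ᵥ x) i - μ| ≤ (1 - c) ^ k * ((⨆ j, x j) - ⨅ j, x j) := by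
  set lo : ℕ → ℝ := fun k => ⨅ j, (P ^ k *ᵥ x) j
  set hi : ℕ → ℝ := fun k => ⨆ j, (P ^ k *ᵥ x) j
  have hmem : ∀ k j, (P ^ k *ᵥ x) j ∈ Icc (lo k) (hi k) := fun k j =>
    ⟨ciInf_le (Finite.bddBelow_range _) j, le_ciSup (Finite.bddAbove_range _) j⟩
  have hstep : ∀ k i, (P ^ (k + 1) *ᵥ x) i ∈
      Icc (lo k + c * ((P ^ k *ᵥ x) r - lo k)) (hi k - c * (hi k - (P ^ k *ᵥ x) r)) := by
    intro k i
    rw [pow_succ', ← mulVec_mulVec]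
    exact mulVec_apply_mem_Icc_of_mem_rowStochastic hP hc (hmem k) i
  have hlo_step : ∀ k, lo k + c * ((P ^ k *ᵥ x) r - lo k) ≤ lo (k + 1) := fun k =>
    le_ciInf fun i => (hstep k i).1
  have hhi_step : ∀ k, hi (k + 1) ≤ hi k - c * (hi k - (P ^ k *ᵥ x) r) := fun k =>
    ciSup_le fun i => (hstep k i).2
  have hlo : Monotone lo := monotone_nat_of_le_succ fun k => by
    nlinarith [hlo_step k, (hmem k r).1]
  have hhi : Antitone hi := antitone_nat_of_succ_le fun k => by
    nlinarith [hhi_step k, (hmem k r).2]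
  have hc₁ : c ≤ 1 := (hc r).trans (le_one_of_mem_rowStochastic hP)
  have hwidth : ∀ k, hi k - lo k ≤ (1 - c) ^ k * (hi 0 - lo 0) := by
    intro k
    induction k with
    | zero => simp
    | succ k ih =>
      calc hi (k + 1) - lo (k + 1) ≤ (1 - c) * (hi k - lo k) := by
            linarith [hlo_step k, hhi_step k]
        _ ≤ (1 - c) ^ (k + 1) * (hi 0 - lo 0) := by
            rw [pow_succ', mul_assoc]
            exact mul_le_mul_of_nonneg_left ih (sub_nonneg.2 hc₁)
  obtain ⟨i₀⟩ := ‹Nonempty ι›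
  have hμ := mem_iInter.1 <| hlo.ciSup_mem_iInter_Icc_of_antitone hhi fun k =>
    (hmem k i₀).1.trans (hmem k i₀).2
  refine ⟨⨆ k, lo k, fun k i => abs_sub_le_iff.2 ?_⟩
  simp only [hi, lo, pow_zero, one_mulVec] at hwidth
  constructor <;> linarith [(hmem k i).1, (hmem k i).2, (hμ k).1, (hμ k).2, hwidth k]

theorem exists_norm_pow_mulVec_sub_const_le [Nonempty ι] (hP : P ∈ rowStochastic ℝ ι) {r : ι}
    {c : ℝ} (hc₀ : 0 ≤ c) (hc : ∀ i, c ≤ P i r) (x : ι → ℝ) :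
    ∃ μ : ℝ, ∀ k : ℕ, ‖P ^ k *ᵥ x - fun _ => μ‖ ≤ 2 * (1 - c) ^ k * ‖x - fun _ => μ‖ := by
  obtain ⟨μ, hμ⟩ := exists_abs_pow_mulVec_sub_le hP hc₀ hc x
  have hc₁ : 0 ≤ 1 - c := sub_nonneg.2 ((hc r).trans (le_one_of_mem_rowStochastic hP))
  have hx : ∀ j, |x j - μ| ≤ ‖x - fun _ => μ‖ := fun j => norm_le_pi_norm (x - fun _ => μ) j
  have hspread : (⨆ j, x j) - ⨅ j, x j ≤ 2 * ‖x - fun _ => μ‖ := by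
    have h1 : (⨆ j, x j) ≤ μ + ‖x - fun _ => μ‖ := ciSup_le fun j => by
      linarith [(abs_le.1 (hx j)).2]
    have h2 : μ - ‖x - fun _ => μ‖ ≤ ⨅ j, x j := le_ciInf fun j => by
      linarith [(abs_le.1 (hx j)).1]
    linarith
  refine ⟨μ, fun k => (pi_norm_le_iff_of_nonneg (by positivity)).2 fun i => ?_⟩
  calc _ ≤ (1 - c) ^ k * ((⨆ j, x j) - ⨅ j, x j) := hμ k i
    _ ≤ (1 - c) ^ k * (2 * ‖x - fun _ => μ‖) :=
        mul_le_mul_of_nonneg_left hspread (pow_nonneg hc₁ k)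
    _ = 2 * (1 - c) ^ k * ‖x - fun _ => μ‖ := by ring

end Stochastic

section Kronecker

variable {m n : Type*} [Fintype m] [Fintype n] [DecidableEq n]

attribute [local instance] Matrix.linftyOpNormedRing Matrix.linftyOpNormedAlgebra in
theorem exp_kronecker_one [DecidableEq m] (A : Matrix m m ℝ) :
    exp (A ⊗ₖ (1 : Matrix n n ℝ)) = exp A ⊗ₖ (1 : Matrix n n ℝ) := by
  rw [kronecker_one, kronecker_one, exp_blockDiagonal]
  congr 1
  exact Pi.exp_def _

theorem kronecker_one_mulVec_apply (A : Matrix m m ℝ) (v : m × n → ℝ) (i : m) (k : n) :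
    (A ⊗ₖ (1 : Matrix n n ℝ) *ᵥ v) (i, k) = (A *ᵥ fun j => v (j, k)) i := by
  simp [mulVec, dotProduct, Fintype.sum_prod_type, one_apply]

end Kronecker

end Matrix

section Laplacian

variable {N : ℕ} {a : Fin N → Fin N → ℝ}

theorem graphLaplacian_mulVec_apply (a : Fin N → Fin N → ℝ) (x : Fin N → ℝ) (i : Fin N) :
    (graphLaplacian a *ᵥ x) i = ∑ j, a i j * (x i - x j) := by
  rw [mulVec, dotProduct, ← Finset.add_sum_erase _ _ (Finset.mem_univ i),
    ← Finset.add_sum_erase _ _ (Finset.mem_univ i)]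
  simp only [graphLaplacian, of_apply, if_true, sub_self, mul_zero, zero_add]
  rw [Finset.sum_mul, ← Finset.sum_add_distrib]
  refine Finset.sum_congr rfl fun j hj => ?_
  rw [if_neg (Finset.ne_of_mem_erase hj).symm]
  ring

theorem graphLaplacian_mulVec_one (a : Fin N → Fin N → ℝ) : graphLaplacian a *ᵥ 1 = 0 := by
  ext i
  simp [graphLaplacian_mulVec_apply]

/-- Minimum principle: `(L z) i ≤ 0` at a minimum `i` of `z`; apply it to `y` and `-y`. -/
theorem graphLaplacian_mulVec_ne_const [Nonempty (Fin N)] (ha : ∀ i j, 0 ≤ a i j)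
    (y : Fin N → ℝ) {c : ℝ} (hc : c ≠ 0) : graphLaplacian a *ᵥ y ≠ fun _ => c := by
  have hmin : ∀ z : Fin N → ℝ, ∃ i, (graphLaplacian a *ᵥ z) i ≤ 0 := fun z => by
    obtain ⟨i, hi⟩ := Finite.exists_min z
    refine ⟨i, ?_⟩
    rw [graphLaplacian_mulVec_apply]
    exact Finset.sum_nonpos fun j _ => mul_nonpos_of_nonneg_of_nonpos (ha i j) (sub_nonpos.2 (hi j))
  intro h
  rcases hc.lt_or_gt with hneg | hpos
  · obtain ⟨i, hi⟩ := hmin (-y)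
    rw [mulVec_neg, h] at hi
    exact (neg_nonpos.1 hi).not_gt hneg
  · obtain ⟨i, hi⟩ := hmin y
    rw [h] at hi
    exact hi.not_gt hpos

theorem exists_graphLaplacian_eq_smul_one_sub (ha : ∀ i j, 0 ≤ a i j) :
    ∃ (c : ℝ) (B : Matrix (Fin N) (Fin N) ℝ),
      (∀ i j, 0 ≤ B i j) ∧ (∀ i j, i ≠ j → B i j = a i j) ∧ graphLaplacian a = c • 1 - B := by
  refine ⟨∑ i, ∑ j, a i j, (∑ i, ∑ j, a i j) • 1 - graphLaplacian a, fun i j => ?_,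
    fun i j hij => by simp [graphLaplacian, hij], by abel⟩
  rcases eq_or_ne i j with rfl | hij
  · have hrow : ∑ j ∈ Finset.univ.erase i, a i j ≤ ∑ j, a i j :=
      Finset.sum_le_sum_of_subset_of_nonneg (Finset.erase_subset _ _) fun j _ _ => ha i j
    have htot : ∑ j, a i j ≤ ∑ i, ∑ j, a i j :=
      Finset.single_le_sum (f := fun i => ∑ j, a i j)
        (fun i _ => Finset.sum_nonneg fun j _ => ha i j) (Finset.mem_univ i)
    simp only [Matrix.sub_apply, Matrix.smul_apply, one_apply_eq, smul_eq_mul, mul_one,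
      graphLaplacian, of_apply, if_true]
    linarith
  · simpa [graphLaplacian, hij] using ha i j

theorem exp_neg_smul_graphLaplacian_mem_rowStochastic (ha : ∀ i j, 0 ≤ a i j) {t : ℝ}
    (ht : 0 ≤ t) : exp ((-t) • graphLaplacian a) ∈ rowStochastic ℝ (Fin N) := by
  obtain ⟨c, B, hB, -, hL⟩ := exists_graphLaplacian_eq_smul_one_sub ha
  have hexp : exp ((-t) • graphLaplacian a) = Real.exp (-(t * c)) • exp (t • B) := by
    rw [← exp_add_smul_one, hL]
    congr 1
    module
  refine mem_rowStochastic.2 ⟨fun i j => ?_, exp_mulVec_of_mulVec_eq_zero ?_⟩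
  · rw [hexp, Matrix.smul_apply, smul_eq_mul]
    exact mul_nonneg (Real.exp_nonneg _) (exp_apply_nonneg (fun i j => mul_nonneg ht (hB i j)) i j)
  · rw [smul_mulVec, graphLaplacian_mulVec_one, smul_zero]

theorem exp_neg_graphLaplacian_apply_pos (ha : ∀ i j, 0 ≤ a i j) {r : Fin N}
    (hr : ∀ v, Relation.ReflTransGen (fun u v => 0 < a v u) r v) (i : Fin N) :
    0 < exp (-graphLaplacian a) i r := by
  obtain ⟨c, B, hB, hBa, hL⟩ := exists_graphLaplacian_eq_smul_one_sub ha
  have hpath : Relation.ReflTransGen (fun u v => 0 < B v u) r i := by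
    refine Relation.ReflTransGen.lift' id (fun u v huv => ?_) r i (hr i)
    rcases eq_or_ne v u with rfl | hne
    · exact Relation.ReflTransGen.refl
    · exact Relation.ReflTransGen.single (by rwa [id, id, hBa v u hne])
  obtain ⟨k, hk⟩ := exists_pow_apply_pos_of_reflTransGen hB hpath
  rw [show -graphLaplacian a = B + (-c) • 1 by rw [hL]; module, exp_add_smul_one, Matrix.smul_apply,
    smul_eq_mul]
  exact mul_pos (Real.exp_pos _) <|
    (by positivity : 0 < (k ! : ℝ)⁻¹ * (B ^ k) i r).trans_le
      (pow_apply_div_factorial_le_exp_apply hB k i r)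

theorem exists_norm_exp_neg_smul_graphLaplacian_mulVec_sub_const_le
    (ha : ∀ i j, 0 ≤ a i j) (hroot : hasRootedOutBranch a) :
    ∃ ρ : ℝ, 0 < ρ ∧ ρ < 1 ∧ ∀ x : Fin N → ℝ, ∃ μ : ℝ, ∀ t : ℝ, 0 ≤ t →
      ‖exp ((-t) • graphLaplacian a) *ᵥ x - fun _ => μ‖ ≤ 2 * ρ ^ ⌊t⌋₊ * ‖x - fun _ => μ‖ := by
  obtain ⟨r, hr⟩ := hroot
  have : Nonempty (Fin N) := ⟨r⟩
  set P := exp (-graphLaplacian a)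
  have hP : P ∈ rowStochastic ℝ (Fin N) := by
    simpa using exp_neg_smul_graphLaplacian_mem_rowStochastic ha zero_le_one
  obtain ⟨i₀, hi₀⟩ := Finite.exists_min fun i => P i r
  have hpos : 0 < P i₀ r := exp_neg_graphLaplacian_apply_pos ha hr i₀
  have hle : P i₀ r ≤ 1 := le_one_of_mem_rowStochastic hP
  -- halving the smallest entry of column `r` keeps the rate `1 - P i₀ r / 2` positive
  refine ⟨1 - P i₀ r / 2, by linarith, by linarith, fun x => ?_⟩
  obtain ⟨μ, hμ⟩ := exists_norm_pow_mulVec_sub_const_le hP (c := P i₀ r / 2) (by positivity)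
    (fun i => (half_le_self hpos.le).trans (hi₀ i)) x
  refine ⟨μ, fun t ht => ?_⟩
  have hsplit : exp ((-t) • graphLaplacian a) =
      exp ((-(t - ⌊t⌋₊)) • graphLaplacian a) * P ^ ⌊t⌋₊ := by
    rw [← Matrix.exp_nsmul, ← Matrix.exp_add_of_commute]
    · congr 1
      module
    · exact (((Commute.refl _).neg_right).smul_left _).smul_right _
  have hQ := exp_neg_smul_graphLaplacian_mem_rowStochastic ha (sub_nonneg.2 (Nat.floor_le ht))
  rw [hsplit, ← mulVec_mulVec, ← mulVec_sub_const_of_mem_rowStochastic hQ]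
  exact (norm_mulVec_le_of_mem_rowStochastic hQ _).trans (hμ ⌊t⌋₊)

end Laplacian

section Convergence

variable {ι : Type*} [Fintype ι]

theorem norm_le_euclidNorm (v : ι → ℝ) : ‖v‖ ≤ euclidNorm v := by
  refine (pi_norm_le_iff_of_nonneg (Real.sqrt_nonneg _)).2 fun i => ?_
  rw [Real.norm_eq_abs, ← Real.sqrt_sq_eq_abs]
  exact Real.sqrt_le_sqrt (Finset.single_le_sum (fun j _ => sq_nonneg (v j)) (Finset.mem_univ i))

theorem euclidNorm_le_sqrt_card_mul_norm (v : ι → ℝ) :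
    euclidNorm v ≤ √(Fintype.card ι) * ‖v‖ := by
  rw [euclidNorm, ← Real.sqrt_sq (norm_nonneg v), ← Real.sqrt_mul (Nat.cast_nonneg _)]
  refine Real.sqrt_le_sqrt ?_
  calc ∑ i, v i ^ 2 ≤ ∑ _i : ι, ‖v‖ ^ 2 := Finset.sum_le_sum fun i _ => by
        rw [← sq_abs, ← Real.norm_eq_abs]
        exact pow_le_pow_left₀ (norm_nonneg _) (norm_le_pi_norm v i) 2
    _ = Fintype.card ι * ‖v‖ ^ 2 := by simp

theorem pow_floor_le_inv_mul_exp {ρ : ℝ} (h₀ : 0 < ρ) (h₁ : ρ ≤ 1) (t : ℝ) :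
    ρ ^ ⌊t⌋₊ ≤ ρ⁻¹ * Real.exp (Real.log ρ * t) := by
  calc ρ ^ ⌊t⌋₊ = Real.exp (Real.log ρ * ⌊t⌋₊) := by
        rw [← Real.rpow_natCast, Real.rpow_def_of_pos h₀]
    _ ≤ Real.exp (Real.log ρ * (t - 1)) :=
        Real.exp_le_exp.2 <| mul_le_mul_of_nonpos_left (by linarith [Nat.lt_floor_add_one t])
          (Real.log_nonpos h₀.le h₁)
    _ = ρ⁻¹ * Real.exp (Real.log ρ * t) := by
        rw [mul_sub, mul_one, Real.exp_sub, Real.exp_log h₀, div_eq_inv_mul]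

variable [DecidableEq ι]

/-- The solution `t ↦ exp (-t M) q₀` of `q' = -M q` converges exponentially to `qinf`. -/
def ConvergesExponentially (M : Matrix ι ι ℝ) (q₀ qinf : ι → ℝ) : Prop :=
  ∃ η > (0 : ℝ), ∃ lam > (0 : ℝ), ∀ t : ℝ, 0 ≤ t →
    euclidNorm (exp ((-t) • M) *ᵥ q₀ - qinf) ≤ η * Real.exp (-lam * t) * euclidNorm (q₀ - qinf)

variable {M : Matrix ι ι ℝ} {q₀ qinf : ι → ℝ}

theorem ConvergesExponentially.of_norm_le [Nonempty ι] {C ρ : ℝ} (hC : 0 < C) (hρ₀ : 0 < ρ)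
    (hρ₁ : ρ < 1)
    (h : ∀ t : ℝ, 0 ≤ t → ‖exp ((-t) • M) *ᵥ q₀ - qinf‖ ≤ C * ρ ^ ⌊t⌋₊ * ‖q₀ - qinf‖) :
    ConvergesExponentially M q₀ qinf := by
  refine ⟨√(Fintype.card ι) * C * ρ⁻¹, by positivity, -Real.log ρ,
    neg_pos.2 (Real.log_neg hρ₀ hρ₁), fun t ht => ?_⟩
  calc _ ≤ √(Fintype.card ι) * ‖exp ((-t) • M) *ᵥ q₀ - qinf‖ := euclidNorm_le_sqrt_card_mul_norm _
    _ ≤ √(Fintype.card ι) * (C * (ρ⁻¹ * Real.exp (Real.log ρ * t)) * euclidNorm (q₀ - qinf)) := by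
        gcongr
        refine (h t ht).trans ?_
        gcongr
        exacts [pow_floor_le_inv_mul_exp hρ₀ hρ₁.le t, norm_le_euclidNorm _]
    _ = _ := by ring_nf

theorem ConvergesExponentially.tendsto (h : ConvergesExponentially M q₀ qinf) :
    Tendsto (fun t : ℝ => exp ((-t) • M) *ᵥ q₀) atTop (𝓝 qinf) := by
  obtain ⟨η, -, lam, hlam, h⟩ := h
  rw [tendsto_iff_norm_sub_tendsto_zero]
  have hlim : Tendsto (fun t => η * Real.exp (-lam * t) * euclidNorm (q₀ - qinf)) atTop (𝓝 0) := by
    simpa using ((Real.tendsto_exp_atBot.comp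
      (tendsto_id.const_mul_atTop_of_neg (neg_neg_of_pos hlam))).const_mul η).mul_const _
  refine squeeze_zero' (Eventually.of_forall fun t => norm_nonneg _) ?_ hlim
  filter_upwards [eventually_ge_atTop 0] with t ht using (norm_le_euclidNorm _).trans (h t ht)

theorem sub_mem_range_of_tendsto (h : Tendsto (fun t : ℝ => exp ((-t) • M) *ᵥ q₀) atTop (𝓝 qinf)) :
    qinf - q₀ ∈ LinearMap.range M.mulVecLin := by
  have hmem : ∀ t : ℝ, exp ((-t) • M) *ᵥ q₀ - q₀ ∈ LinearMap.range M.mulVecLin := fun t => by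
    obtain ⟨w, hw⟩ := exp_mulVec_sub_mem_range ((-t) • M) q₀
    exact ⟨(-t) • w, by rw [mulVecLin_apply, mulVec_smul, ← smul_mulVec, ← hw, mulVecLin_apply]⟩
  exact (Submodule.closed_of_finiteDimensional _).mem_of_tendsto (h.sub_const q₀)
    (Eventually.of_forall hmem)

theorem ConvergesExponentially.mem_range_iff (h : ConvergesExponentially M q₀ qinf) :
    q₀ ∈ LinearMap.range M.mulVecLin ↔ qinf ∈ LinearMap.range M.mulVecLin := by
  have hsub := sub_mem_range_of_tendsto h.tendsto
  exact ⟨fun h₀ => by simpa using add_mem hsub h₀, fun hinf => by simpa using sub_mem hinf hsub⟩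

end Convergence

section Consensus

variable {N n : ℕ} {a : Fin N → Fin N → ℝ}

theorem notMem_range_graphLaplacian_kronecker_one (ha : ∀ i j, 0 ≤ a i j)
    {q : Fin N × Fin n → ℝ} (hcons : ∀ i j : Fin N, ∀ k : Fin n, q (i, k) = q (j, k))
    (hq : q ≠ 0) :
    q ∉ LinearMap.range (graphLaplacian a ⊗ₖ (1 : Matrix (Fin n) (Fin n) ℝ)).mulVecLin := by
  rintro ⟨z, hz⟩
  obtain ⟨⟨i₀, k₀⟩, hq₀⟩ := Function.ne_iff.1 hq
  have : Nonempty (Fin N) := ⟨i₀⟩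
  refine graphLaplacian_mulVec_ne_const ha (fun j => z (j, k₀)) hq₀ (funext fun i => ?_)
  rw [← kronecker_one_mulVec_apply, ← mulVecLin_apply, hz]
  exact hcons i i₀ k₀

theorem exists_consensus_convergesExponentially [Nonempty (Fin n)] (ha : ∀ i j, 0 ≤ a i j)
    (hroot : hasRootedOutBranch a) (q₀ : Fin N × Fin n → ℝ) :
    ∃ qinf : Fin N × Fin n → ℝ, (∀ i j : Fin N, ∀ k : Fin n, qinf (i, k) = qinf (j, k)) ∧
      ConvergesExponentially (graphLaplacian a ⊗ₖ (1 : Matrix (Fin n) (Fin n) ℝ)) q₀ qinf := by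
  have : Nonempty (Fin N) := let ⟨r, _⟩ := hroot; ⟨r⟩
  obtain ⟨ρ, hρ₀, hρ₁, hslice⟩ :=
    exists_norm_exp_neg_smul_graphLaplacian_mulVec_sub_const_le ha hroot
  choose μ hμ using fun k : Fin n => hslice fun j => q₀ (j, k)
  refine ⟨fun p => μ p.2, fun _ _ _ => rfl, .of_norm_le two_pos hρ₀ hρ₁ fun t ht => ?_⟩
  refine (pi_norm_le_iff_of_nonneg (by positivity)).2 fun ⟨i, k⟩ => ?_
  have hq₀ : ‖(fun j => q₀ (j, k)) - fun _ => μ k‖ ≤ ‖q₀ - fun p => μ p.2‖ :=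
    (pi_norm_le_iff_of_nonneg (norm_nonneg _)).2 fun j =>
      norm_le_pi_norm (q₀ - fun p => μ p.2) (j, k)
  rw [← smul_kronecker, exp_kronecker_one, Pi.sub_apply, kronecker_one_mulVec_apply]
  calc _ ≤ ‖exp ((-t) • graphLaplacian a) *ᵥ (fun j => q₀ (j, k)) - fun _ => μ k‖ :=
        norm_le_pi_norm (exp ((-t) • graphLaplacian a) *ᵥ (fun j => q₀ (j, k)) - fun _ => μ k) i
    _ ≤ 2 * ρ ^ ⌊t⌋₊ * ‖(fun j => q₀ (j, k)) - fun _ => μ k‖ := hμ k t ht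
    _ ≤ 2 * ρ ^ ⌊t⌋₊ * ‖q₀ - fun p => μ p.2‖ := mul_le_mul_of_nonneg_left hq₀ (by positivity)

end Consensus

/-- for `q̇ = −(L ⊗ Iₙ) q` with solution `q(t) = exp(−t(L ⊗ Iₙ)) q(0)` on a
graph with a rooted-out branch, `q(t)` converges exponentially to a NONZERO point of the
consensus set iff `q(0)` is not in the column space of `L ⊗ Iₙ`. -/
theorem consensus_nonzero_limit_iff_not_in_column_space
    (N n : ℕ) (a : Fin N → Fin N → ℝ) (ha : ∀ i j, 0 ≤ a i j)
    (L : Matrix (Fin N) (Fin N) ℝ) (hL : L = graphLaplacian a)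
    (hroot : hasRootedOutBranch a)
    (q0 : Fin N × Fin n → ℝ) :
    (∃ qinf : Fin N × Fin n → ℝ,
        (∀ i j : Fin N, ∀ k : Fin n, qinf (i, k) = qinf (j, k)) ∧ qinf ≠ 0 ∧
        ∃ η > (0 : ℝ), ∃ lam > (0 : ℝ), ∀ t : ℝ, 0 ≤ t →
          euclidNorm ((NormedSpace.exp ((-t) • (L ⊗ₖ (1 : Matrix (Fin n) (Fin n) ℝ)))).mulVec q0
              - qinf)
            ≤ η * Real.exp (-lam * t) * euclidNorm (q0 - qinf))
    ↔ ¬ (∃ y : Fin N × Fin n → ℝ,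
          (L ⊗ₖ (1 : Matrix (Fin n) (Fin n) ℝ)).mulVec y = q0) := by
  subst hL
  constructor
  · rintro ⟨qinf, hcons, hne, hconv⟩ hq0
    exact notMem_range_graphLaplacian_kronecker_one ha hcons hne
      ((ConvergesExponentially.mem_range_iff hconv).1 hq0)
  · intro hq0
    have : Nonempty (Fin n) := by
      by_contra h
      exact hq0 ⟨0, funext fun p => (not_nonempty_iff.1 h).elim p.2⟩
    obtain ⟨qinf, hcons, hconv⟩ := exists_consensus_convergesExponentially ha hroot q0
    refine ⟨qinf, hcons, fun h0 => hq0 ?_, hconv⟩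
    exact hconv.mem_range_iff.2 (h0 ▸ zero_mem _)
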